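/- arXiv:2211.13434 — 4 statements merged into one kernel-verified Lean document; each statement's English description precedes it below -/
import Mathlib

section
/- For every real number ε with 0 < ε < 1 and every positive integer L, there exists a natural number e such that ⌈(1/(1-ε))^e⌉ ≤ L and ⌈(1/(1-ε))^e⌉ > (1-ε)·L. -/
/-- For every real `ε` with `0 < ε < 1` and every positive integer `L`,
there exists a natural number `e` such that `⌈(1/(1-ε))^e⌉ ≤ L` and
`⌈(1/(1-ε))^e⌉ > (1-ε)·L`. -/
theorem grid_length_approx (ε : ℝ) (hε0 : 0 < ε) (hε1 : ε < 1) (L : ℕ) (hL : 0 < L) :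
    ∃ e : ℕ, ⌈(1 / (1 - ε)) ^ e⌉₊ ≤ L ∧
      (1 - ε) * (L : ℝ) < (⌈(1 / (1 - ε)) ^ e⌉₊ : ℝ) := by
  set c : ℝ := 1 / (1 - ε) with hc
  have h1ε : (0:ℝ) < 1 - ε := by linarith
  have hc1 : 1 < c := by
    rw [hc, lt_div_iff₀ h1ε]; linarith
  have hcpos : 0 < c := lt_trans one_pos hc1
  have hmul : (1 - ε) * c = 1 := by
    rw [hc, mul_one_div_cancel h1ε.ne']
  have hex : ∃ n : ℕ, (L:ℝ) < c ^ (n+1) := by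
    obtain ⟨n, hn⟩ := pow_unbounded_of_one_lt (L:ℝ) hc1
    exact ⟨n, lt_of_lt_of_le hn (pow_le_pow_right₀ hc1.le (Nat.le_succ n))⟩
  classical
  set e := Nat.find hex with he
  have hlt : (L:ℝ) < c ^ (e+1) := Nat.find_spec hex
  have hle : c ^ e ≤ (L:ℝ) := by
    rcases Nat.eq_zero_or_pos e with h0 | hpos
    · rw [h0, pow_zero]; exact_mod_cast hL
    · have := Nat.find_min hex (m := e - 1) (by omega)
      push_neg at this
      have : c ^ (e - 1 + 1) ≤ (L:ℝ) := this
      rwa [Nat.sub_add_cancel hpos] at this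
  refine ⟨e, Nat.ceil_le.mpr hle, ?_⟩
  have h2 : (1 - ε) * (L:ℝ) < (1 - ε) * c ^ (e+1) :=
    (mul_lt_mul_iff_right₀ h1ε).mpr hlt
  have h3 : (1 - ε) * c ^ (e+1) = c ^ e := by
    rw [pow_succ, ← mul_assoc, mul_comm (1-ε) (c^e), mul_assoc, hmul, mul_one]
  calc (1 - ε) * (L:ℝ) < c ^ e := by rw [← h3]; exact h2
  _ ≤ ⌈c ^ e⌉₊ := Nat.le_ceil _
end

section
/- For every real number ε with 0 < ε < 1, every positive integer L₁, and every natural number L₂, there exist natural numbers ℓ₁ and ℓ₂ such that: ℓ₁ = ⌈(1/(1-ε))^{e₁}⌉ for some natural number e₁ with ℓ₁ ≤ L₁; ℓ₂ = 0 or ℓ₂ = ⌈(1/(1-ε))^{e₂}⌉ for some natural number e₂, with ℓ₂ ≤ L₂; and ℓ₁ + ℓ₂ > (1-ε)·(L₁ + L₂). -/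
lemma grid_length_approx_one (ε : ℝ) (hε0 : 0 < ε) (hε1 : ε < 1)
    (L : ℕ) (hL : 0 < L) :
    ∃ ℓ : ℕ, (∃ e : ℕ, ℓ = ⌈(1 / (1 - ε)) ^ e⌉₊) ∧ ℓ ≤ L ∧
      (1 - ε) * (L : ℝ) < (ℓ : ℝ) := by
  set c : ℝ := 1 / (1 - ε) with hc
  have h1ε : 0 < 1 - ε := by linarith
  have hc1 : 1 < c := by
    rw [hc, lt_div_iff₀ h1ε]; linarith
  have hcε : (1 - ε) * c = 1 := by
    rw [hc]; field_simp
  have P : ℕ → Prop := fun e => ⌈c ^ e⌉₊ ≤ L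
  obtain ⟨n, hn⟩ := pow_unbounded_of_one_lt (L : ℝ) hc1
  have hPn : ¬ (⌈c ^ n⌉₊ ≤ L) := by
    rw [not_le, Nat.lt_ceil]; exact hn
  have hP0 : ⌈c ^ 0⌉₊ ≤ L := by
    simp; omega
  classical
  set e := Nat.findGreatest (fun e => ⌈c ^ e⌉₊ ≤ L) n with he
  have hle : e ≤ n := Nat.findGreatest_le n
  have hPe : ⌈c ^ e⌉₊ ≤ L :=
    Nat.findGreatest_spec (P := fun e => ⌈c ^ e⌉₊ ≤ L) (Nat.zero_le n) hP0
  have hen : e ≠ n := fun h => hPn (h ▸ hPe)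
  have hsucc : ¬ (⌈c ^ (e + 1)⌉₊ ≤ L) :=
    Nat.findGreatest_is_greatest (P := fun e => ⌈c ^ e⌉₊ ≤ L) (n := n) (k := e + 1) (by omega) (by omega)
  have hlt : (L : ℝ) < c ^ (e + 1) := by
    rw [← Nat.lt_ceil]; omega
  refine ⟨⌈c ^ e⌉₊, ⟨e, rfl⟩, hPe, ?_⟩
  have hcpos : 0 ≤ (1 - ε) := le_of_lt h1ε
  calc (1 - ε) * (L : ℝ) < (1 - ε) * c ^ (e + 1) := by
        apply mul_lt_mul_of_pos_left hlt h1ε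
    _ = c ^ e := by rw [pow_succ, ← mul_assoc, mul_comm (1 - ε), mul_assoc, hcε, mul_one]
    _ ≤ ⌈c ^ e⌉₊ := Nat.le_ceil _

/-- For every real `ε` with `0 < ε < 1`, every positive integer `L₁`,
and every natural number `L₂`, there exist natural numbers `ℓ₁` and `ℓ₂` such that
`ℓ₁ = ⌈(1/(1-ε))^{e₁}⌉` for some natural `e₁` with `ℓ₁ ≤ L₁`; `ℓ₂ = 0` or
`ℓ₂ = ⌈(1/(1-ε))^{e₂}⌉` for some natural `e₂`, with `ℓ₂ ≤ L₂`; and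
`ℓ₁ + ℓ₂ > (1-ε)·(L₁ + L₂)`. -/
theorem grid_length_approx_pair (ε : ℝ) (hε0 : 0 < ε) (hε1 : ε < 1)
    (L₁ : ℕ) (hL₁ : 0 < L₁) (L₂ : ℕ) :
    ∃ ℓ₁ ℓ₂ : ℕ,
      (∃ e₁ : ℕ, ℓ₁ = ⌈(1 / (1 - ε)) ^ e₁⌉₊) ∧ ℓ₁ ≤ L₁ ∧
      (ℓ₂ = 0 ∨ ∃ e₂ : ℕ, ℓ₂ = ⌈(1 / (1 - ε)) ^ e₂⌉₊) ∧ ℓ₂ ≤ L₂ ∧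
      (1 - ε) * ((L₁ : ℝ) + (L₂ : ℝ)) < (ℓ₁ : ℝ) + (ℓ₂ : ℝ) := by
  obtain ⟨ℓ₁, he₁, hle₁, hgt₁⟩ := grid_length_approx_one ε hε0 hε1 L₁ hL₁
  rcases Nat.eq_zero_or_pos L₂ with h2 | h2
  · exact ⟨ℓ₁, 0, he₁, hle₁, Or.inl rfl, by omega, by
      subst h2; push_cast; linarith⟩
  · obtain ⟨ℓ₂, he₂, hle₂, hgt₂⟩ := grid_length_approx_one ε hε0 hε1 L₂ h2
    exact ⟨ℓ₁, ℓ₂, he₁, hle₁, Or.inr he₂, hle₂, by nlinarith⟩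
end

section
/- Let T be a nonempty finite string (a list over an alphabet) of length n, and let T = p₁ p₂ ⋯ p_z be a factorization of T into nonempty phrases such that, for each phrase p_t starting at position s_t (0-indexed, so s_t is the sum of the lengths of p₁, ..., p_{t-1}), either p_t has length 1 or there exists a position s < s_t with T[s .. s + |p_t| - 1] = p_t. Then for every nonempty string S and every position a such that a is the least index at which S occurs in T (i.e., T[a .. a + |S| - 1] = S and S occurs at no smaller index), there exists a phrase index t whose phrase ends at a position e (so e = s_t + |p_t| - 1) with a ≤ e ≤ a + |S| - 1. -/
/-- `S` occurs in `T` at (0-indexed) position `a`: `T[a .. a + |S| - 1] = S`. -/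
def OccursAt {α : Type*} (T S : List α) (a : ℕ) : Prop :=
  (T.drop a).take S.length = S

/-- The starting position of the `t`-th phrase (0-indexed) of the factorization `ps`:
the sum of the lengths of the preceding phrases. -/
def phraseStart {α : Type*} (ps : List (List α)) (t : ℕ) : ℕ :=
  ((ps.take t).map List.length).sum

lemma phraseStart_cons {α : Type*} (p : List α) (ps : List (List α)) (t : ℕ) :
    phraseStart (p :: ps) (t+1) = p.length + phraseStart ps t := by
  simp [phraseStart]

lemma drop_phraseStart {α : Type*} (ps : List (List α)) (t : ℕ) :
    ps.flatten.drop (phraseStart ps t) = (ps.drop t).flatten := by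
  induction ps generalizing t with
  | nil => simp [phraseStart]
  | cons p ps ih =>
    cases t with
    | zero => simp [phraseStart]
    | succ t =>
      rw [phraseStart_cons, List.flatten_cons, List.drop_append]
      simp [ih]

lemma exists_phrase {α : Type*} (ps : List (List α))
    (a : ℕ) (ha : a < ps.flatten.length) :
    ∃ t, t < ps.length ∧ phraseStart ps t ≤ a ∧
      a < phraseStart ps t + (ps.getD t []).length := by
  induction ps generalizing a with
  | nil => simp at ha
  | cons p ps ih =>
    by_cases h : a < p.length
    · exact ⟨0, by simp, by simp [phraseStart], by simpa [phraseStart] using h⟩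
    · push_neg at h
      have ha' : a - p.length < ps.flatten.length := by
        simp [List.length_flatten] at ha ⊢; omega
      obtain ⟨t, ht, h1, h2⟩ := ih _ ha'
      refine ⟨t+1, by simpa using ht, ?_, ?_⟩
      · rw [phraseStart_cons]; omega
      · rw [phraseStart_cons, List.getD_cons_succ]; omega

lemma prefix_drop {α : Type*} {l₁ l₂ : List α} (h : l₁ <+: l₂) (n : ℕ) :
    l₁.drop n <+: l₂.drop n := by
  obtain ⟨t, rfl⟩ := h
  rw [List.drop_append]
  exact ⟨_, rfl⟩

lemma occursAt_iff_prefix {α : Type*} (T S : List α) (a : ℕ) :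
    OccursAt T S a ↔ S <+: T.drop a := by
  constructor
  · intro h; rw [← h]; exact List.take_prefix _ _
  · intro h; rw [OccursAt, ← List.prefix_iff_eq_take.mp h]


/-- **Farach–Thorup observation.** Let `T` be a nonempty string factored
into nonempty phrases `p₁ ⋯ p_z` such that each phrase either has length `1` or occurs
in `T` at some position strictly before its own starting position. Then the leftmost
occurrence of any nonempty string `S` in `T` touches a phrase boundary: some phrase
ends at a position `e` with `a ≤ e ≤ a + |S| - 1`, where `a` is the leftmost
occurrence position of `S`. -/
theorem leftmost_occurrence_touches_phrase_boundary {α : Type*}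
    (T : List α) (hT : T ≠ []) (ps : List (List α)) (hfact : ps.flatten = T)
    (hne : ∀ p ∈ ps, p ≠ [])
    (hparse : ∀ t, t < ps.length →
      (ps.getD t []).length = 1 ∨
        ∃ s, s < phraseStart ps t ∧ OccursAt T (ps.getD t []) s)
    (S : List α) (hS : S ≠ []) (a : ℕ)
    (ha : OccursAt T S a) (hmin : ∀ a', a' < a → ¬ OccursAt T S a') :
    ∃ t, t < ps.length ∧
      a ≤ phraseStart ps t + (ps.getD t []).length - 1 ∧
      phraseStart ps t + (ps.getD t []).length - 1 ≤ a + S.length - 1 := by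
  have hSlen : 0 < S.length := List.length_pos_iff.mpr hS
  have hfit : a + S.length ≤ T.length := by
    have := congrArg List.length ha
    simp [List.length_take, List.length_drop] at this
    omega
  have haT : a < ps.flatten.length := by rw [hfact]; omega
  obtain ⟨t, ht, h1, h2⟩ := exists_phrase ps a haT
  by_cases hcase : phraseStart ps t + (ps.getD t []).length - 1 ≤ a + S.length - 1
  · exact ⟨t, ht, by omega, hcase⟩
  · exfalso
    push_neg at hcase
    have hlen2 : (ps.getD t []).length ≠ 1 := by omega
    rcases hparse t ht with h | ⟨s, hs, hocc⟩
    · exact hlen2 h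
    have hpfx : ps.getD t [] <+: T.drop (phraseStart ps t) := by
      rw [← hfact, drop_phraseStart]
      have hd : ps.drop t = ps.getD t [] :: ps.drop (t+1) := by
        rw [List.getD_eq_getElem _ _ ht]
        exact (List.drop_eq_getElem_cons ht)
      rw [hd, List.flatten_cons]
      exact ⟨_, rfl⟩
    have hSd : S <+: (ps.getD t []).drop (a - phraseStart ps t) := by
      have h1' : (ps.getD t []).drop (a - phraseStart ps t) <+: T.drop a := by
        have hdd := prefix_drop hpfx (a - phraseStart ps t)
        rw [List.drop_drop] at hdd
        have heq : phraseStart ps t + (a - phraseStart ps t) = a := by omega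
        rwa [heq] at hdd
      have h2' : S <+: T.drop a := (occursAt_iff_prefix T S a).mp ha
      refine List.prefix_of_prefix_length_le h2' h1' ?_
      rw [List.length_drop]; omega
    have hpocc : ps.getD t [] <+: T.drop s := (occursAt_iff_prefix T _ s).mp hocc
    have hfin : S <+: T.drop (s + (a - phraseStart ps t)) := by
      have hdd := prefix_drop hpocc (a - phraseStart ps t)
      rw [List.drop_drop] at hdd
      exact hSd.trans hdd
    exact hmin (s + (a - phraseStart ps t)) (by omega)
      ((occursAt_iff_prefix T S _).mpr hfin)
end

section
/- Let ε be a real number with 0 < ε < 1 and set c = 1/(1-ε). Let P and T be finite strings over an alphabet, and let A and B be strings with A nonempty such that the concatenation A ++ B is a (contiguous) substring of both P and T. Then there exist a suffix A' of A and a prefix B' of B such that: |A'| = ⌈c^{e₁}⌉ for some natural number e₁; |B'| = 0 or |B'| = ⌈c^{e₂}⌉ for some natural number e₂; A' ++ B' is a (contiguous) substring of both P and T; and |A'| + |B'| > (1-ε)·(|A| + |B|). -/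
lemma grid_exists (ε : ℝ) (hε0 : 0 < ε) (hε1 : ε < 1) (n : ℕ) (hn : 1 ≤ n) :
    ∃ e : ℕ, ⌈(1 / (1 - ε)) ^ e⌉₊ ≤ n ∧
      (1 - ε) * (n : ℝ) < ((⌈(1 / (1 - ε)) ^ e⌉₊ : ℕ) : ℝ) := by
  classical
  have h1 : 0 < 1 - ε := by linarith
  set c : ℝ := 1 / (1 - ε) with hcdef
  have hc : 1 < c := by
    rw [hcdef, lt_div_iff₀ h1]; linarith
  have hx : ∃ k : ℕ, (n : ℝ) < c ^ k := pow_unbounded_of_one_lt _ hc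
  have hk : (n : ℝ) < c ^ Nat.find hx := Nat.find_spec hx
  have hk0 : Nat.find hx ≠ 0 := by
    intro h
    rw [h, pow_zero] at hk
    have : (1 : ℝ) ≤ n := by exact_mod_cast hn
    linarith
  set e : ℕ := Nat.find hx - 1 with he
  have hek : e < Nat.find hx := Nat.sub_lt (Nat.pos_of_ne_zero hk0) one_pos
  have h2 : ¬ (n : ℝ) < c ^ e := Nat.find_min hx hek
  have hsucc : e + 1 = Nat.find hx := Nat.succ_pred_eq_of_pos (Nat.pos_of_ne_zero hk0)
  refine ⟨e, Nat.ceil_le.mpr (not_lt.mp h2), ?_⟩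
  have hk' : (n : ℝ) < c ^ (e + 1) := by rw [hsucc]; exact hk
  have heq : (1 - ε) * c ^ (e + 1) = c ^ e := by
    rw [pow_succ, hcdef]; field_simp
  have : (1 - ε) * (n : ℝ) < c ^ e := by
    calc (1 - ε) * (n : ℝ) < (1 - ε) * c ^ (e + 1) := by
          exact mul_lt_mul_of_pos_left hk' h1
      _ = c ^ e := heq
  exact lt_of_lt_of_le this (Nat.le_ceil _)

/-- Let `0 < ε < 1` and `c = 1/(1-ε)`. Let `P`, `T` be strings and
`A`, `B` strings with `A` nonempty such that `A ++ B` is a contiguous substring of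
both `P` and `T`. Then there are a suffix `A'` of `A` and a prefix `B'` of `B` with
`|A'| = ⌈c^{e₁}⌉` for some natural `e₁`, `|B'| = 0` or `|B'| = ⌈c^{e₂}⌉` for some
natural `e₂`, `A' ++ B'` a contiguous substring of both `P` and `T`, and
`|A'| + |B'| > (1-ε)·(|A| + |B|)`. -/
theorem trim_common_substring {α : Type*} (ε : ℝ) (hε0 : 0 < ε) (hε1 : ε < 1)
    (P T A B : List α) (hA : A ≠ [])
    (hP : (A ++ B) <:+: P) (hT : (A ++ B) <:+: T) :
    ∃ A' B' : List α,
      A' <:+ A ∧ B' <+: B ∧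
      (∃ e₁ : ℕ, A'.length = ⌈(1 / (1 - ε)) ^ e₁⌉₊) ∧
      (B' = [] ∨ ∃ e₂ : ℕ, B'.length = ⌈(1 / (1 - ε)) ^ e₂⌉₊) ∧
      (A' ++ B') <:+: P ∧ (A' ++ B') <:+: T ∧
      (1 - ε) * ((A.length : ℝ) + (B.length : ℝ)) < (A'.length : ℝ) + (B'.length : ℝ) := by
  have hAlen : 1 ≤ A.length := List.length_pos_iff.mpr hA
  obtain ⟨e₁, h₁le, h₁gt⟩ := grid_exists ε hε0 hε1 A.length hAlen
  set g₁ := ⌈(1 / (1 - ε)) ^ e₁⌉₊ with hg₁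
  set A' := A.drop (A.length - g₁) with hA'
  have hAsuf : A' <:+ A := List.drop_suffix _ _
  have hA'len : A'.length = g₁ := by
    rw [hA', List.length_drop]; omega
  obtain ⟨u, hu⟩ := id hAsuf
  by_cases hB : B = []
  · refine ⟨A', [], hAsuf, List.nil_prefix, ⟨e₁, hA'len⟩, Or.inl rfl, ?_, ?_, ?_⟩
    · refine List.IsInfix.trans ?_ hP
      exact ⟨u, B, by rw [List.append_nil, hu]⟩
    · refine List.IsInfix.trans ?_ hT
      exact ⟨u, B, by rw [List.append_nil, hu]⟩
    · subst hB
      simp only [List.length_nil, Nat.cast_zero, add_zero]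
      rw [hA'len]; exact h₁gt
  · have hBlen : 1 ≤ B.length := List.length_pos_iff.mpr hB
    obtain ⟨e₂, h₂le, h₂gt⟩ := grid_exists ε hε0 hε1 B.length hBlen
    set g₂ := ⌈(1 / (1 - ε)) ^ e₂⌉₊ with hg₂
    set B' := B.take g₂ with hB'
    have hB'pre : B' <+: B := List.take_prefix _ _
    have hB'len : B'.length = g₂ := by
      rw [hB', List.length_take]; omega
    obtain ⟨v, hv⟩ := id hB'pre
    have hinf : (A' ++ B') <:+: (A ++ B) :=
      ⟨u, v, by rw [← hu, ← hv]; simp⟩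
    refine ⟨A', B', hAsuf, List.take_prefix _ _, ⟨e₁, hA'len⟩, Or.inr ⟨e₂, hB'len⟩,
      hinf.trans hP, hinf.trans hT, ?_⟩
    rw [hA'len, hB'len]
    have := h₁gt
    have := h₂gt
    nlinarith [h₁gt, h₂gt]
end
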